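/- Let α be a real number with |α| ≤ 1. Define g : [0,∞)×[0,∞) → ℝ by g(t,ξ) = φ_{0,0}(ξ) + ∑_{n=1}^∞ n C_n^0(α) e^{−n² t} φ_{0,n}(ξ), the series converging absolutely at every point. Then for every t > 0 and ξ > 0, the partial derivatives ∂g/∂t, ∂g/∂ξ and ∂²g/∂ξ² exist and satisfy ∂g/∂t (t,ξ) = −ξ² ∂²g/∂ξ² (t,ξ) − ξ ∂g/∂ξ (t,ξ) + ξ² g(t,ξ). -/

import Mathlib

/-- For real `ν ≥ 0` and integer `n ≥ 0`, the function
`φ_{ν,n}(ξ) = ∑_{m=0}^∞ ξ^(n+2m) / (2^(ν+n+2m) Γ(m+1) Γ(ν+n+m+1))`;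
in particular `φ_{0,n}(ξ) = I_n(ξ)`, the modified Bessel function of the first kind. -/
noncomputable def phiBessel (ν : ℝ) (n : ℕ) (ξ : ℝ) : ℝ :=
  ∑' m : ℕ, ξ ^ (n + 2 * m) /
    ((2 : ℝ) ^ (ν + n + 2 * (m : ℝ)) * Real.Gamma ((m : ℝ) + 1) * Real.Gamma (ν + n + m + 1))

/-- The degenerate Gegenbauer polynomial: `C_0^0(x) = 1` and, for `n ≥ 1`,
`C_n^0(x) = ∑_{m=0}^{⌊n/2⌋} (−1)^m Γ(n−m) (2x)^(n−2m) / (Γ(m+1) Γ(n−2m+1))`. -/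
noncomputable def gegenbauerC0 (n : ℕ) (x : ℝ) : ℝ :=
  if n = 0 then 1 else
    ∑ m ∈ Finset.range (n / 2 + 1),
      (-1 : ℝ) ^ m * Real.Gamma ((n : ℝ) - m) * (2 * x) ^ (n - 2 * m) /
        (Real.Gamma ((m : ℝ) + 1) * Real.Gamma ((n : ℝ) - 2 * m + 1))

/-- The function `g(t,ξ) = φ_{0,0}(ξ) + ∑_{n=1}^∞ n C_n^0(α) e^(−n²t) φ_{0,n}(ξ)`. -/
noncomputable def gZero (α t ξ : ℝ) : ℝ :=
  phiBessel 0 0 ξ +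
    ∑' n : ℕ, ((n + 1 : ℕ) : ℝ) * gegenbauerC0 (n + 1) α *
      Real.exp (-((n + 1 : ℕ) : ℝ) ^ 2 * t) * phiBessel 0 (n + 1) ξ

/-!
Each term `n C_n^0(α) e^{-n²t} I_n(ξ)` of `g` solves the equation because `I_n` solves the modified
Bessel equation `ξ² I_n'' + ξ I_n' = (n² + ξ²) I_n`, which on the power series of `I_n` is the
recurrence `4 (m + 1) (n + m + 1) a_{n,m+1} = a_{n,m}` of its coefficients. Both term-by-term
differentiations, of the power series of `I_n` and of the series defining `g`, are justified by
majorants that are uniform on `|ξ| ≤ R`: the `j`-th derivative of `I_n` is at most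
`(2^j R)^n / n! · exp ((2^j R)²)` there, while the crude bound `|C_n^0(α)| ≤ 8^n` for `|α| ≤ 1`
keeps the coefficients `n C_n^0(α) e^{-n²t}` and their `t`-derivatives below `64^n` for `t ≥ 0`.
-/

open scoped Nat

/-- The `j`-th term-by-term derivative of `∑' m, c m * x ^ e m`. -/
noncomputable def termwiseDeriv (c : ℕ → ℝ) (e : ℕ → ℕ) (j : ℕ) (x : ℝ) : ℝ :=
  ∑' m, c m * ((e m).descFactorial j * x ^ (e m - j))

lemma abs_descFactorial_mul_pow_le {R x : ℝ} (hR : 1 ≤ R) (hx : |x| ≤ R) (k j : ℕ) :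
    |(k.descFactorial j : ℝ) * x ^ (k - j)| ≤ (2 ^ j * R) ^ k := by
  rw [abs_mul, abs_pow, Nat.abs_cast, mul_pow, ← pow_mul, mul_comm j k, pow_mul]
  gcongr
  · exact_mod_cast (k.descFactorial_le_pow j).trans (Nat.pow_le_pow_left k.lt_two_pow_self.le j)
  · exact (pow_le_pow_left₀ (abs_nonneg x) hx _).trans (pow_le_pow_right₀ hR (k.sub_le j))

lemma pow_mul_descFactorial_mul_pow (x : ℝ) (k j : ℕ) :
    x ^ j * ((k.descFactorial j : ℝ) * x ^ (k - j)) = k.descFactorial j * x ^ k := by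
  rcases le_or_gt j k with hjk | hkj
  · rw [mul_left_comm, ← pow_add, Nat.add_sub_cancel' hjk]
  · simp [Nat.descFactorial_eq_zero_iff_lt.2 hkj]

section termwiseDeriv

variable {c : ℕ → ℝ} {e : ℕ → ℕ}

lemma abs_termwiseDeriv_term_le {R x : ℝ} (hR : 1 ≤ R) (hx : |x| ≤ R) (j m : ℕ) :
    |c m * ((e m).descFactorial j * x ^ (e m - j))| ≤ |c m| * (2 ^ j * R) ^ e m := by
  rw [abs_mul]
  exact mul_le_mul_of_nonneg_left (abs_descFactorial_mul_pow_le hR hx _ _) (abs_nonneg _)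

lemma summable_termwiseDeriv_term (hc : ∀ ρ, 0 ≤ ρ → Summable fun m => |c m| * ρ ^ e m)
    (j : ℕ) (x : ℝ) :
    Summable fun m => c m * ((e m).descFactorial j * x ^ (e m - j)) :=
  .of_norm_bounded (hc _ (by positivity))
    (abs_termwiseDeriv_term_le (le_add_of_nonneg_left (abs_nonneg x))
      (le_add_of_nonneg_right zero_le_one) j)

lemma abs_termwiseDeriv_le (hc : ∀ ρ, 0 ≤ ρ → Summable fun m => |c m| * ρ ^ e m) {R x : ℝ}
    (hR : 1 ≤ R) (hx : |x| ≤ R) (j : ℕ) :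
    |termwiseDeriv c e j x| ≤ ∑' m, |c m| * (2 ^ j * R) ^ e m :=
  tsum_of_norm_bounded (f := fun m => c m * ((e m).descFactorial j * x ^ (e m - j)))
    (hc (2 ^ j * R) (by positivity)).hasSum (abs_termwiseDeriv_term_le hR hx j)

lemma hasDerivAt_termwiseDeriv (hc : ∀ ρ, 0 ≤ ρ → Summable fun m => |c m| * ρ ^ e m)
    (j : ℕ) (x : ℝ) :
    HasDerivAt (termwiseDeriv c e j) (termwiseDeriv c e (j + 1) x) x := by
  have hR : 1 ≤ |x| + 1 := le_add_of_nonneg_left (abs_nonneg x)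
  have hx : x ∈ Metric.ball (0 : ℝ) (|x| + 1) := by simp
  refine hasDerivAt_tsum_of_isPreconnected (hc (2 ^ (j + 1) * (|x| + 1)) (by positivity))
    Metric.isOpen_ball (convex_ball _ _).isPreconnected
    (g := fun m y => c m * ((e m).descFactorial j * y ^ (e m - j)))
    (g' := fun m y => c m * ((e m).descFactorial (j + 1) * y ^ (e m - (j + 1))))
    (fun m y _ => ?_) (fun m y hy => ?_) hx (summable_termwiseDeriv_term hc j x) hx
  · have h := ((hasDerivAt_pow (e m - j) y).const_mul ((e m).descFactorial j : ℝ)).const_mul (c m)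
    rw [Nat.sub_sub] at h
    refine h.congr_deriv ?_
    rw [Nat.descFactorial_succ, Nat.cast_mul]
    ring
  · rw [mem_ball_zero_iff, Real.norm_eq_abs] at hy
    exact abs_termwiseDeriv_term_le hR hy.le (j + 1) m

end termwiseDeriv

noncomputable def besselCoeff (n m : ℕ) : ℝ := 1 / (2 ^ (n + 2 * m) * m ! * (n + m)!)

/-- `besselDeriv n j` is the `j`-th derivative of the modified Bessel function `I_n`. -/
noncomputable def besselDeriv (n j : ℕ) : ℝ → ℝ :=
  termwiseDeriv (besselCoeff n) (n + 2 * ·) j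

lemma phiBessel_zero_eq_besselDeriv (n : ℕ) : phiBessel 0 n = besselDeriv n 0 := by
  funext ξ
  refine tsum_congr fun m => ?_
  have h2 : (0 : ℝ) + n + 2 * (m : ℝ) = ((n + 2 * m : ℕ) : ℝ) := by push_cast; ring
  have hΓ : (0 : ℝ) + n + m + 1 = ((n + m : ℕ) : ℝ) + 1 := by push_cast; ring
  rw [h2, hΓ, Real.rpow_natCast, Real.Gamma_nat_eq_factorial, Real.Gamma_nat_eq_factorial,
    besselCoeff, Nat.descFactorial_zero, Nat.sub_zero]
  push_cast
  ring

lemma besselCoeff_nonneg (n m : ℕ) : 0 ≤ besselCoeff n m := by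
  unfold besselCoeff
  positivity

lemma besselCoeff_succ_mul (n m : ℕ) :
    besselCoeff n (m + 1) * (4 * (m + 1) * (n + m + 1)) = besselCoeff n m := by
  simp only [besselCoeff, show n + 2 * (m + 1) = n + 2 * m + 2 by ring, ← Nat.add_assoc,
    pow_add, Nat.factorial_succ]
  push_cast
  field_simp
  ring

lemma besselCoeff_mul_pow_le {ρ : ℝ} (hρ : 0 ≤ ρ) (n m : ℕ) :
    besselCoeff n m * ρ ^ (n + 2 * m) ≤ ρ ^ n / n ! * ((ρ ^ 2) ^ m / m !) := by
  have hfact : (n ! * m ! : ℝ) ≤ 2 ^ (n + 2 * m) * m ! * (n + m)! := by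
    have h : (n ! * m ! : ℝ) ≤ (n + m)! := by
      exact_mod_cast
        Nat.le_of_dvd (Nat.factorial_pos _) (n.factorial_mul_factorial_dvd_factorial_add m)
    calc (n ! * m ! : ℝ) ≤ 1 * 1 * (n + m)! := by rwa [one_mul, one_mul]
      _ ≤ _ := by
        gcongr
        · exact one_le_pow₀ one_le_two
        · exact Nat.one_le_cast.2 m.factorial_pos
  calc besselCoeff n m * ρ ^ (n + 2 * m)
      = ρ ^ n * (ρ ^ 2) ^ m / (2 ^ (n + 2 * m) * m ! * (n + m)!) := by
        rw [besselCoeff, pow_add, pow_mul]; ring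
    _ ≤ ρ ^ n * (ρ ^ 2) ^ m / (n ! * m !) :=
        div_le_div_of_nonneg_left (by positivity) (by positivity) hfact
    _ = ρ ^ n / n ! * ((ρ ^ 2) ^ m / m !) := by ring

lemma summable_abs_besselCoeff_mul_pow (n : ℕ) :
    ∀ ρ, 0 ≤ ρ → Summable fun m => |besselCoeff n m| * ρ ^ (n + 2 * m) := by
  intro ρ hρ
  simp only [abs_of_nonneg (besselCoeff_nonneg _ _)]
  exact .of_nonneg_of_le (fun m => by have := besselCoeff_nonneg n m; positivity)
    (besselCoeff_mul_pow_le hρ n) ((Real.summable_pow_div_factorial _).mul_left _)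

lemma tsum_besselCoeff_mul_pow_le (n : ℕ) {ρ : ℝ} (hρ : 0 ≤ ρ) :
    ∑' m, |besselCoeff n m| * ρ ^ (n + 2 * m) ≤ ρ ^ n / n ! * Real.exp (ρ ^ 2) := by
  have hexp : HasSum (fun m => (ρ ^ 2) ^ m / m !) (Real.exp (ρ ^ 2)) := by
    rw [Real.exp_eq_exp_ℝ]; exact NormedSpace.expSeries_div_hasSum_exp _
  refine hasSum_le (fun m => ?_) (summable_abs_besselCoeff_mul_pow n ρ hρ).hasSum
    (hexp.mul_left _)
  rw [abs_of_nonneg (besselCoeff_nonneg _ _)]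
  exact besselCoeff_mul_pow_le hρ n m

lemma hasDerivAt_besselDeriv (n j : ℕ) (x : ℝ) :
    HasDerivAt (besselDeriv n j) (besselDeriv n (j + 1) x) x :=
  hasDerivAt_termwiseDeriv (summable_abs_besselCoeff_mul_pow n) j x

lemma abs_besselDeriv_le {R x : ℝ} (hR : 1 ≤ R) (hx : |x| ≤ R) (n j : ℕ) :
    |besselDeriv n j x| ≤ (2 ^ j * R) ^ n / n ! * Real.exp ((2 ^ j * R) ^ 2) :=
  (abs_termwiseDeriv_le (summable_abs_besselCoeff_mul_pow n) hR hx j).trans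
    (tsum_besselCoeff_mul_pow_le n (by positivity))

lemma besselDeriv_equation (n : ℕ) (x : ℝ) :
    x ^ 2 * besselDeriv n 2 x + x * besselDeriv n 1 x - n ^ 2 * besselDeriv n 0 x
      = x ^ 2 * besselDeriv n 0 x := by
  set T : ℕ → ℕ → ℝ := fun j m =>
    besselCoeff n m * ((n + 2 * m).descFactorial j * x ^ (n + 2 * m - j))
  have hT : ∀ j, Summable (T j) :=
    fun j => summable_termwiseDeriv_term (summable_abs_besselCoeff_mul_pow n) j x
  set F : ℕ → ℝ := fun m => x ^ 2 * T 2 m + x * T 1 m - n ^ 2 * T 0 m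
  have hF : ∀ m,
      F m = besselCoeff n m * ((((n + 2 * m : ℕ) : ℝ) ^ 2 - n ^ 2) * x ^ (n + 2 * m)) := by
    intro m
    have h2 := pow_mul_descFactorial_mul_pow x (n + 2 * m) 2
    have h1 := pow_mul_descFactorial_mul_pow x (n + 2 * m) 1
    have hk : ∀ k : ℕ, (k.descFactorial 2 : ℝ) + k.descFactorial 1 = (k : ℝ) ^ 2 := by
      rintro (_ | k) <;> simp [Nat.descFactorial_succ]; ring
    simp only [F, T, Nat.descFactorial_zero, Nat.sub_zero, pow_one, Nat.cast_one, one_mul]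
      at h1 h2 ⊢
    linear_combination besselCoeff n m * (h2 + h1 + x ^ (n + 2 * m) * hk (n + 2 * m))
  have hF_succ : ∀ m, F (m + 1) = x ^ 2 * T 0 m := by
    intro m
    simp only [hF, T, Nat.descFactorial_zero, Nat.sub_zero, Nat.cast_one, one_mul,
      ← besselCoeff_succ_mul n m, show n + 2 * (m + 1) = n + 2 * m + 2 by ring, pow_add]
    push_cast
    ring
  have hFsum : Summable F :=
    (((hT 2).mul_left _).add ((hT 1).mul_left _)).sub ((hT 0).mul_left _)
  calc x ^ 2 * besselDeriv n 2 x + x * besselDeriv n 1 x - n ^ 2 * besselDeriv n 0 x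
      = ∑' m, F m := by
        simp only [besselDeriv, termwiseDeriv, F, ← tsum_mul_left]
        rw [Summable.tsum_sub (((hT 2).mul_left _).add ((hT 1).mul_left _)) ((hT 0).mul_left _),
          Summable.tsum_add ((hT 2).mul_left _) ((hT 1).mul_left _)]
    _ = x ^ 2 * besselDeriv n 0 x := by
        rw [hFsum.tsum_eq_zero_add, hF 0, tsum_congr hF_succ, tsum_mul_left]
        simp [besselDeriv, termwiseDeriv, T]

section BesselSeries

variable {w : ℕ → ℝ} {L : ℝ}

lemma abs_mul_besselDeriv_le (hw : ∀ n, |w n| ≤ L ^ n) {R x : ℝ} (hR : 1 ≤ R) (hx : |x| ≤ R)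
    (n j : ℕ) :
    |w n * besselDeriv n j x| ≤ (L * (2 ^ j * R)) ^ n / n ! * Real.exp ((2 ^ j * R) ^ 2) := by
  rw [abs_mul, mul_pow, mul_div_assoc, mul_assoc]
  exact mul_le_mul (hw n) (abs_besselDeriv_le hR hx n j) (abs_nonneg _)
    ((abs_nonneg _).trans (hw n))

lemma summable_abs_mul_besselDeriv (hw : ∀ n, |w n| ≤ L ^ n) (j : ℕ) (x : ℝ) :
    Summable fun n => |w n * besselDeriv n j x| :=
  .of_nonneg_of_le (fun _ => abs_nonneg _)
    (abs_mul_besselDeriv_le hw (le_add_of_nonneg_left (abs_nonneg x))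
      (le_add_of_nonneg_right zero_le_one) · j)
    ((Real.summable_pow_div_factorial _).mul_right _)

lemma hasDerivAt_tsum_mul_besselDeriv (hw : ∀ n, |w n| ≤ L ^ n) (j : ℕ) (x : ℝ) :
    HasDerivAt (fun y => ∑' n, w n * besselDeriv n j y)
      (∑' n, w n * besselDeriv n (j + 1) x) x := by
  have hR : 1 ≤ |x| + 1 := le_add_of_nonneg_left (abs_nonneg x)
  have hx : x ∈ Metric.ball (0 : ℝ) (|x| + 1) := by simp
  set ρ := 2 ^ (j + 1) * (|x| + 1)
  refine hasDerivAt_tsum_of_isPreconnected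
    ((Real.summable_pow_div_factorial (L * ρ)).mul_right (Real.exp (ρ ^ 2))) Metric.isOpen_ball
    (convex_ball _ _).isPreconnected (fun n y _ => (hasDerivAt_besselDeriv n j y).const_mul (w n))
    (fun n y hy => ?_) hx (summable_abs_mul_besselDeriv hw j x).of_abs hx
  rw [mem_ball_zero_iff, Real.norm_eq_abs] at hy
  exact abs_mul_besselDeriv_le hw hR hy.le n (j + 1)

lemma tsum_neg_sq_mul_besselDeriv (hw : ∀ n, |w n| ≤ L ^ n) (x : ℝ) :
    ∑' n : ℕ, -(n : ℝ) ^ 2 * w n * besselDeriv n 0 x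
      = -x ^ 2 * ∑' n, w n * besselDeriv n 2 x - x * ∑' n, w n * besselDeriv n 1 x
        + x ^ 2 * ∑' n, w n * besselDeriv n 0 x := by
  have hS : ∀ j, Summable fun n => w n * besselDeriv n j x :=
    fun j => (summable_abs_mul_besselDeriv hw j x).of_abs
  rw [← tsum_mul_left, ← tsum_mul_left, ← tsum_mul_left,
    ← Summable.tsum_sub ((hS 2).mul_left _) ((hS 1).mul_left _),
    ← Summable.tsum_add (((hS 2).mul_left _).sub ((hS 1).mul_left _)) ((hS 0).mul_left _)]
  refine tsum_congr fun n => ?_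
  linear_combination w n * besselDeriv_equation n x

end BesselSeries

lemma gamma_div_gamma_mul_gamma_le_two_pow {n m : ℕ} (hn : n ≠ 0) (hm : 2 * m ≤ n) :
    Real.Gamma ((n : ℝ) - m) / (Real.Gamma ((m : ℝ) + 1) * Real.Gamma ((n : ℝ) - 2 * m + 1))
      ≤ 2 ^ n := by
  have e1 : (n : ℝ) - m = ((n - m - 1 : ℕ) : ℝ) + 1 := by
    rw [Nat.sub_sub, Nat.cast_sub (by omega)]; push_cast; ring
  have e2 : (n : ℝ) - 2 * m + 1 = ((n - 2 * m : ℕ) : ℝ) + 1 := by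
    rw [Nat.cast_sub hm]; push_cast; ring
  rw [e1, e2, Real.Gamma_nat_eq_factorial, Real.Gamma_nat_eq_factorial,
    Real.Gamma_nat_eq_factorial, div_le_iff₀ (by positivity)]
  have hchoose := Nat.choose_mul_factorial_mul_factorial (show m ≤ n - m by omega)
  rw [Nat.sub_sub n m m, ← two_mul] at hchoose
  calc ((n - m - 1)! : ℝ) ≤ (n - m)! := by exact_mod_cast Nat.factorial_le (by omega)
    _ = (n - m).choose m * (m ! * (n - 2 * m)!) := by rw [← hchoose]; push_cast; ring
    _ ≤ 2 ^ n * (m ! * (n - 2 * m)!) := by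
      gcongr
      exact_mod_cast (Nat.choose_le_two_pow _ _).trans (Nat.pow_le_pow_right two_pos (n.sub_le m))

lemma abs_gegenbauerC0_le {α : ℝ} (hα : |α| ≤ 1) (n : ℕ) : |gegenbauerC0 n α| ≤ 8 ^ n := by
  rcases eq_or_ne n 0 with rfl | hn
  · simp [gegenbauerC0]
  have hterm : ∀ m ∈ Finset.range (n / 2 + 1),
      |(-1 : ℝ) ^ m * Real.Gamma ((n : ℝ) - m) * (2 * α) ^ (n - 2 * m) /
        (Real.Gamma ((m : ℝ) + 1) * Real.Gamma ((n : ℝ) - 2 * m + 1))| ≤ 2 ^ n * 2 ^ n := by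
    intro m hm
    have hm : 2 * m ≤ n := by rw [Finset.mem_range] at hm; omega
    have hΓ : 0 < Real.Gamma ((n : ℝ) - m) :=
      Real.Gamma_pos_of_pos (by rw [sub_pos]; exact_mod_cast (show m < n by omega))
    have hΓ' : 0 < Real.Gamma ((m : ℝ) + 1) * Real.Gamma ((n : ℝ) - 2 * m + 1) :=
      mul_pos (Real.Gamma_pos_of_pos (by positivity))
        (Real.Gamma_pos_of_pos (by
          have : (2 * m : ℝ) ≤ n := by exact_mod_cast hm
          linarith))
    rw [abs_div, abs_mul, abs_mul, abs_pow, abs_neg, abs_one, one_pow, one_mul, abs_of_pos hΓ,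
      abs_of_pos hΓ', abs_pow, mul_div_right_comm]
    refine mul_le_mul (gamma_div_gamma_mul_gamma_le_two_pow hn hm) ?_
      (by positivity) (by positivity)
    calc |2 * α| ^ (n - 2 * m) ≤ 2 ^ (n - 2 * m) := by
          gcongr; rw [abs_mul, abs_two]; linarith
      _ ≤ 2 ^ n := pow_le_pow_right₀ one_le_two (n.sub_le _)
  calc |gegenbauerC0 n α| ≤ (n / 2 + 1 : ℕ) * (2 ^ n * 2 ^ n) := by
        rw [gegenbauerC0, if_neg hn]
        refine (Finset.abs_sum_le_sum_abs _ _).trans ?_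
        simpa using Finset.sum_le_sum hterm
    _ ≤ 2 ^ n * (2 ^ n * 2 ^ n) := by
        gcongr; exact_mod_cast (show n / 2 + 1 ≤ n + 1 by omega).trans n.lt_two_pow_self
    _ = 8 ^ n := by rw [← mul_pow, ← mul_pow]; norm_num

/-- The coefficient of `I_n` in `gZero α t`. -/
noncomputable def gZeroCoeff (α : ℝ) : ℕ → ℝ → ℝ
  | 0, _ => 1
  | n + 1, t =>
    ((n + 1 : ℕ) : ℝ) * gegenbauerC0 (n + 1) α * Real.exp (-((n + 1 : ℕ) : ℝ) ^ 2 * t)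

lemma hasDerivAt_gZeroCoeff (α : ℝ) (n : ℕ) (t : ℝ) :
    HasDerivAt (gZeroCoeff α n) (-(n : ℝ) ^ 2 * gZeroCoeff α n t) t := by
  cases n with
  | zero => exact (hasDerivAt_const t (1 : ℝ)).congr_deriv (by simp)
  | succ n =>
    have h := (((hasDerivAt_id t).const_mul (-((n + 1 : ℕ) : ℝ) ^ 2)).exp).const_mul
      (((n + 1 : ℕ) : ℝ) * gegenbauerC0 (n + 1) α)
    refine h.congr_deriv ?_
    simp only [gZeroCoeff, id]
    ring

lemma abs_gZeroCoeff_le {α t : ℝ} (hα : |α| ≤ 1) (ht : 0 ≤ t) (n : ℕ) :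
    |gZeroCoeff α n t| ≤ 16 ^ n := by
  cases n with
  | zero => simp [gZeroCoeff]
  | succ n =>
    have hexp : |Real.exp (-((n + 1 : ℕ) : ℝ) ^ 2 * t)| ≤ 1 := by
      rw [Real.abs_exp, Real.exp_le_one_iff, neg_mul]
      exact neg_nonpos.2 (by positivity)
    have hk : ((n + 1 : ℕ) : ℝ) ≤ 2 ^ (n + 1) := by exact_mod_cast (n + 1).lt_two_pow_self.le
    rw [gZeroCoeff, abs_mul, abs_mul, Nat.abs_cast, show (16 : ℝ) = 2 * 8 by norm_num, mul_pow,
      ← mul_one ((2 : ℝ) ^ (n + 1) * 8 ^ (n + 1))]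
    exact mul_le_mul (mul_le_mul hk (abs_gegenbauerC0_le hα _) (abs_nonneg _) (by positivity))
      hexp (abs_nonneg _) (by positivity)

lemma abs_neg_sq_mul_gZeroCoeff_le {α t : ℝ} (hα : |α| ≤ 1) (ht : 0 ≤ t) (n : ℕ) :
    |-(n : ℝ) ^ 2 * gZeroCoeff α n t| ≤ 64 ^ n := by
  have hn : (n : ℝ) ^ 2 ≤ 4 ^ n := by
    rw [show (4 : ℝ) = 2 ^ 2 by norm_num, ← pow_mul, mul_comm, pow_mul]
    gcongr; exact_mod_cast n.lt_two_pow_self.le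
  rw [abs_mul, abs_neg, abs_pow, Nat.abs_cast, show (64 : ℝ) = 4 * 16 by norm_num, mul_pow]
  exact mul_le_mul hn (abs_gZeroCoeff_le hα ht n) (abs_nonneg _) (by positivity)

lemma gZero_eq_tsum {α t : ℝ} (hα : |α| ≤ 1) (ht : 0 ≤ t) (ξ : ℝ) :
    gZero α t ξ = ∑' n, gZeroCoeff α n t * besselDeriv n 0 ξ := by
  rw [(summable_abs_mul_besselDeriv (abs_gZeroCoeff_le hα ht) 0 ξ).of_abs.tsum_eq_zero_add]
  simp only [gZero, gZeroCoeff, one_mul, phiBessel_zero_eq_besselDeriv]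

lemma hasDerivAt_gZero_time {α t : ℝ} (hα : |α| ≤ 1) (ht : 0 < t) (ξ : ℝ) :
    HasDerivAt (fun s => gZero α s ξ)
      (∑' n : ℕ, -(n : ℝ) ^ 2 * gZeroCoeff α n t * besselDeriv n 0 ξ) t := by
  have hR : 1 ≤ |ξ| + 1 := le_add_of_nonneg_left (abs_nonneg ξ)
  set ρ := 2 ^ 0 * (|ξ| + 1)
  have h : HasDerivAt (fun s => ∑' n, gZeroCoeff α n s * besselDeriv n 0 ξ)
      (∑' n : ℕ, -(n : ℝ) ^ 2 * gZeroCoeff α n t * besselDeriv n 0 ξ) t :=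
    hasDerivAt_tsum_of_isPreconnected
      ((Real.summable_pow_div_factorial (64 * ρ)).mul_right (Real.exp (ρ ^ 2))) isOpen_Ioi
      isPreconnected_Ioi (fun n s _ => (hasDerivAt_gZeroCoeff α n s).mul_const _)
      (fun n s hs => abs_mul_besselDeriv_le (abs_neg_sq_mul_gZeroCoeff_le hα (le_of_lt hs))
        hR (le_add_of_nonneg_right zero_le_one) n 0)
      ht (summable_abs_mul_besselDeriv (abs_gZeroCoeff_le hα ht.le) 0 ξ).of_abs ht
  refine h.congr_of_eventuallyEq ?_
  filter_upwards [Ioi_mem_nhds ht] with s hs using gZero_eq_tsum hα (le_of_lt hs) ξ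

lemma hasDerivAt_gZero_space {α t : ℝ} (hα : |α| ≤ 1) (ht : 0 ≤ t) (ξ : ℝ) :
    HasDerivAt (fun η => gZero α t η) (∑' n, gZeroCoeff α n t * besselDeriv n 1 ξ) ξ := by
  rw [funext (gZero_eq_tsum hα ht)]
  exact hasDerivAt_tsum_mul_besselDeriv (abs_gZeroCoeff_le hα ht) 0 ξ

/-- Let `|α| ≤ 1`.  The series defining `g` converges absolutely at every point of
`[0,∞) × [0,∞)`, and for every `t > 0` and `ξ > 0` the partial derivatives
`∂g/∂t`, `∂g/∂ξ`, `∂²g/∂ξ²` exist and satisfy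
`∂g/∂t = −ξ² ∂²g/∂ξ² − ξ ∂g/∂ξ + ξ² g`. -/
theorem gZero_heat_equation (α : ℝ) (hα : |α| ≤ 1) :
    (∀ t ξ : ℝ, 0 ≤ t → 0 ≤ ξ →
      Summable (fun n : ℕ => |((n + 1 : ℕ) : ℝ) * gegenbauerC0 (n + 1) α *
        Real.exp (-((n + 1 : ℕ) : ℝ) ^ 2 * t) * phiBessel 0 (n + 1) ξ|)) ∧
    ∀ t ξ : ℝ, 0 < t → 0 < ξ →
      DifferentiableAt ℝ (fun s => gZero α s ξ) t ∧
      DifferentiableAt ℝ (fun η => gZero α t η) ξ ∧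
      DifferentiableAt ℝ (deriv (fun η => gZero α t η)) ξ ∧
      deriv (fun s => gZero α s ξ) t =
        -ξ ^ 2 * deriv (deriv (fun η => gZero α t η)) ξ
          - ξ * deriv (fun η => gZero α t η) ξ + ξ ^ 2 * gZero α t ξ := by
  refine ⟨fun t ξ ht _ => ?_, fun t ξ ht _ => ?_⟩
  · simpa only [gZeroCoeff, phiBessel_zero_eq_besselDeriv] using
      (summable_nat_add_iff 1).2 (summable_abs_mul_besselDeriv (abs_gZeroCoeff_le hα ht) 0 ξ)
  have hw := abs_gZeroCoeff_le hα ht.le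
  have htime := hasDerivAt_gZero_time hα ht ξ
  have hspace := hasDerivAt_gZero_space hα ht.le
  have hderiv : deriv (fun η => gZero α t η) =
      fun η => ∑' n, gZeroCoeff α n t * besselDeriv n 1 η :=
    funext fun η => (hspace η).deriv
  have hspace2 := hasDerivAt_tsum_mul_besselDeriv hw 1 ξ
  rw [hderiv]
  refine ⟨htime.differentiableAt, (hspace ξ).differentiableAt, hspace2.differentiableAt, ?_⟩
  rw [htime.deriv, hspace2.deriv, gZero_eq_tsum hα ht.le]
  exact tsum_neg_sq_mul_besselDeriv hw ξ
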